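/- Let G be a finite simple graph containing no theta, pyramid, prism, or turtle as an induced subgraph, and let C be a proper separator of G. Then there are exactly two full components for C. -/

import Mathlib

/-!
Since `C` is not a clique, it contains nonadjacent vertices `a` and `b`. Inside each full
component `D` of `C`, a shortest `a`–`b` path in `G[D ∪ {a, b}]` is chordless and has its
interior in `D`. Paths through distinct components have disjoint interiors with no edges
between them, so any two of them form a hole; three full components would thus yield a theta.
-/

namespace Paper

open SimpleGraph

variable {V : Type*}

/-- The set of neighbors of `v` inside the set `H`. -/
def nbrsIn (G : SimpleGraph V) (v : V) (H : Set V) : Set V :=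
  {u | u ∈ H ∧ G.Adj v u}

/-- The vertex set of a walk. -/
def supp {G : SimpleGraph V} {a b : V} (P : G.Walk a b) : Set V :=
  {v | v ∈ P.support}

/-- `H` is a hole of `G`: an induced cycle of length at least 4.  (A finite
graph is a cycle iff it is connected and `2`-regular.) -/
def IsHole (G : SimpleGraph V) (H : Set V) : Prop :=
  H.Finite ∧ 4 ≤ H.ncard ∧ (G.induce H).Connected ∧
    ∀ v ∈ H, (nbrsIn G v H).ncard = 2

/-- `G` contains a theta as an induced subgraph. -/
def HasTheta (G : SimpleGraph V) : Prop :=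
  ∃ (a b : V) (P₁ P₂ P₃ : G.Walk a b),
    a ≠ b ∧ ¬ G.Adj a b ∧
    P₁.IsPath ∧ P₂.IsPath ∧ P₃.IsPath ∧
    2 ≤ P₁.length ∧ 2 ≤ P₂.length ∧ 2 ≤ P₃.length ∧
    (∀ v, v ∈ P₁.support → v ∈ P₂.support → v = a ∨ v = b) ∧
    (∀ v, v ∈ P₁.support → v ∈ P₃.support → v = a ∨ v = b) ∧
    (∀ v, v ∈ P₂.support → v ∈ P₃.support → v = a ∨ v = b) ∧
    IsHole G (supp P₁ ∪ supp P₂) ∧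
    IsHole G (supp P₁ ∪ supp P₃) ∧
    IsHole G (supp P₂ ∪ supp P₃)

/-- `G` contains a pyramid as an induced subgraph. -/
def HasPyramid (G : SimpleGraph V) : Prop :=
  ∃ (a b₁ b₂ b₃ : V) (P₁ : G.Walk a b₁) (P₂ : G.Walk a b₂) (P₃ : G.Walk a b₃),
    G.Adj b₁ b₂ ∧ G.Adj b₂ b₃ ∧ G.Adj b₁ b₃ ∧
    P₁.IsPath ∧ P₂.IsPath ∧ P₃.IsPath ∧
    (∀ v, v ∈ P₁.support → v ∈ P₂.support → v = a) ∧
    (∀ v, v ∈ P₁.support → v ∈ P₃.support → v = a) ∧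
    (∀ v, v ∈ P₂.support → v ∈ P₃.support → v = a) ∧
    ¬ (P₁.length = 1 ∧ P₂.length = 1) ∧
    ¬ (P₁.length = 1 ∧ P₃.length = 1) ∧
    ¬ (P₂.length = 1 ∧ P₃.length = 1) ∧
    IsHole G (supp P₁ ∪ supp P₂) ∧
    IsHole G (supp P₁ ∪ supp P₃) ∧
    IsHole G (supp P₂ ∪ supp P₃)

/-- `G` contains a prism as an induced subgraph. -/
def HasPrism (G : SimpleGraph V) : Prop :=
  ∃ (a₁ a₂ a₃ b₁ b₂ b₃ : V) (P₁ : G.Walk a₁ b₁) (P₂ : G.Walk a₂ b₂)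
      (P₃ : G.Walk a₃ b₃),
    G.Adj a₁ a₂ ∧ G.Adj a₂ a₃ ∧ G.Adj a₁ a₃ ∧
    G.Adj b₁ b₂ ∧ G.Adj b₂ b₃ ∧ G.Adj b₁ b₃ ∧
    P₁.IsPath ∧ P₂.IsPath ∧ P₃.IsPath ∧
    (∀ v, v ∈ P₁.support → v ∉ P₂.support) ∧
    (∀ v, v ∈ P₁.support → v ∉ P₃.support) ∧
    (∀ v, v ∈ P₂.support → v ∉ P₃.support) ∧
    IsHole G (supp P₁ ∪ supp P₂) ∧
    IsHole G (supp P₁ ∪ supp P₃) ∧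
    IsHole G (supp P₂ ∪ supp P₃)

/-- `G` contains a turtle as an induced subgraph. -/
def HasTurtle (G : SimpleGraph V) : Prop :=
  ∃ (a₁ b₁ a₂ b₂ x y : V) (P₁ : G.Walk a₁ b₁) (P₂ : G.Walk a₂ b₂),
    P₁.IsPath ∧ P₂.IsPath ∧
    (∀ v, v ∈ P₁.support → v ∉ P₂.support) ∧
    G.Adj a₁ a₂ ∧ G.Adj b₁ b₂ ∧ G.Adj x y ∧
    x ∉ P₁.support ∧ x ∉ P₂.support ∧ y ∉ P₁.support ∧ y ∉ P₂.support ∧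
    IsHole G (supp P₁ ∪ supp P₂) ∧
    3 ≤ (nbrsIn G x (supp P₁)).ncard ∧
    (∀ v ∈ P₂.support, ¬ G.Adj x v) ∧
    3 ≤ (nbrsIn G y (supp P₂)).ncard ∧
    (∀ v ∈ P₁.support, ¬ G.Adj y v)

/-- `G` contains no theta, pyramid, prism, or turtle as an induced subgraph. -/
def TPPTFree (G : SimpleGraph V) : Prop :=
  ¬ HasTheta G ∧ ¬ HasPyramid G ∧ ¬ HasPrism G ∧ ¬ HasTurtle G

/-- The neighborhood of a set `X`: all vertices outside `X` with a neighbor in `X`. -/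
def setNbrs (G : SimpleGraph V) (X : Set V) : Set V :=
  {v | v ∉ X ∧ ∃ x ∈ X, G.Adj x v}

/-- `A` is a connected component of `G ∖ C`. -/
def IsCompOf (G : SimpleGraph V) (C A : Set V) : Prop :=
  A.Nonempty ∧ Disjoint A C ∧ (G.induce A).Connected ∧
    ∀ a ∈ A, ∀ b : V, G.Adj a b → b ∉ C → b ∈ A

/-- `C` is a minimal separator of `G`: there are two distinct components `L`, `R`
of `G ∖ C` with `N(L) = N(R) = C`. -/
def IsMinSep (G : SimpleGraph V) (C : Set V) : Prop :=
  ∃ L R : Set V, IsCompOf G C L ∧ IsCompOf G C R ∧ L ≠ R ∧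
    setNbrs G L = C ∧ setNbrs G R = C

/-- A proper separator: a minimal separator that is not a clique. -/
def IsProperSep (G : SimpleGraph V) (C : Set V) : Prop :=
  IsMinSep G C ∧ ¬ (∀ a ∈ C, ∀ b ∈ C, a ≠ b → G.Adj a b)

/-- `u` is a minor vertex for the hole `H`: `u ∉ H`, `u` has a neighbor in `H` and
all its neighbors in `H` lie in a path of `H` with at most three vertices. -/
def IsMinorFor (G : SimpleGraph V) (u : V) (H : Set V) : Prop :=
  u ∉ H ∧ (nbrsIn G u H).Nonempty ∧
    ∃ a b c : V, a ∈ H ∧ b ∈ H ∧ c ∈ H ∧ G.Adj a b ∧ G.Adj b c ∧ a ≠ c ∧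
      nbrsIn G u H ⊆ {a, b, c}

/-- `u` is a major vertex for the hole `H`. -/
def IsMajorFor (G : SimpleGraph V) (u : V) (H : Set V) : Prop :=
  u ∉ H ∧ (nbrsIn G u H).Nonempty ∧ ¬ IsMinorFor G u H

/-- `u` is a pendant of `H`: it has a unique neighbor in `H`. -/
def IsPendant (G : SimpleGraph V) (u : V) (H : Set V) : Prop :=
  u ∉ H ∧ ∃ a : V, nbrsIn G u H = {a}

/-- `u` is a cap of `H`: it has exactly two neighbors in `H` and they are adjacent. -/
def IsCap (G : SimpleGraph V) (u : V) (H : Set V) : Prop :=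
  u ∉ H ∧ ∃ a b : V, a ≠ b ∧ G.Adj a b ∧ nbrsIn G u H = {a, b}

/-- `u` is a clone of `y` in `H`: its neighbors in `H` are exactly the three
vertices of a path `x-y-z` of `H`. -/
def IsCloneOf (G : SimpleGraph V) (u y : V) (H : Set V) : Prop :=
  u ∉ H ∧ ∃ x z : V, x ∈ H ∧ y ∈ H ∧ z ∈ H ∧ G.Adj x y ∧ G.Adj y z ∧ x ≠ z ∧
    nbrsIn G u H = {x, y, z}

/-- `u` is a clone (of some vertex) in `H`. -/
def IsClone (G : SimpleGraph V) (u : V) (H : Set V) : Prop :=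
  ∃ y, IsCloneOf G u y H

/-- `P` is a `u`-sector of the hole `H`: a path contained in `H` whose ends are
neighbors of `u` and whose interior is anticomplete to `u`. -/
def IsSector (G : SimpleGraph V) (u : V) (H : Set V) {a b : V} (P : G.Walk a b) : Prop :=
  P.IsPath ∧ (∀ v ∈ P.support, v ∈ H) ∧ G.Adj u a ∧ G.Adj u b ∧
    ∀ v ∈ P.support, v ≠ a → v ≠ b → ¬ G.Adj u v

/-- `u` and `v` are nested with respect to the hole `H`: there are distinct
`a, b ∈ H` such that one `ab`-path of `H` contains all neighbors of `u` in `H`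
and the other `ab`-path of `H` contains all neighbors of `v` in `H`. -/
def Nested (G : SimpleGraph V) (u v : V) (H : Set V) : Prop :=
  ∃ a b : V, a ∈ H ∧ b ∈ H ∧ a ≠ b ∧
    ∃ (P Q : G.Walk a b), P.IsPath ∧ Q.IsPath ∧
      supp P ∪ supp Q = H ∧
      (∀ x, x ∈ P.support → x ∈ Q.support → x = a ∨ x = b) ∧
      (∀ x ∈ H, G.Adj u x → x ∈ P.support) ∧
      (∀ x ∈ H, G.Adj v x → x ∈ Q.support)

/-- `u` is a hub for the hole `H`: its neighbors in `H` are exactly four vertices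
`p, q, r, s` appearing in that order along `H`, with `pq, rs ∈ E(G)` and
`ps, qr ∉ E(G)`. -/
def IsHub (G : SimpleGraph V) (u : V) (H : Set V) : Prop :=
  u ∉ H ∧ ∃ (p q r s : V) (A : G.Walk q r) (B : G.Walk s p),
    p ≠ q ∧ p ≠ r ∧ p ≠ s ∧ q ≠ r ∧ q ≠ s ∧ r ≠ s ∧
    nbrsIn G u H = {p, q, r, s} ∧
    G.Adj p q ∧ G.Adj r s ∧ ¬ G.Adj p s ∧ ¬ G.Adj q r ∧
    A.IsPath ∧ B.IsPath ∧
    (∀ v, v ∈ A.support → v ∉ B.support) ∧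
    supp A ∪ supp B = H

/-- `N` is an extended neighborhood of `w` in the hole `H`. -/
def IsExtNbhd (G : SimpleGraph V) (w : V) (H N : Set V) : Prop :=
  ∃ (x y x' y' : V) (Q : G.Walk x y),
    IsSector G w H Q ∧
    x' ∈ H ∧ x' ∉ Q.support ∧ G.Adj x' x ∧
    y' ∈ H ∧ y' ∉ Q.support ∧ G.Adj y' y ∧
    N = supp Q ∪ ({x', y'} ∩ nbrsIn G w H)

/-- `a` and `b` are distant in `H` with respect to `w`: no extended neighborhood
of `w` in `H` contains both `a` and `b`. -/
def Distant (G : SimpleGraph V) (w : V) (H : Set V) (a b : V) : Prop :=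
  a ∈ H ∧ b ∈ H ∧ ∀ N : Set V, IsExtNbhd G w H N → ¬ (a ∈ N ∧ b ∈ N)

/-- `P` is an `(H, w)`-significant path. -/
def IsSignificant (G : SimpleGraph V) (w : V) (H : Set V) {p q : V}
    (P : G.Walk p q) : Prop :=
  P.IsPath ∧ ∃ a b : V, a ∈ H ∧ G.Adj p a ∧ ¬ G.Adj w a ∧ b ∈ H ∧ G.Adj q b ∧
    Distant G w H a b

/-- `v` is a gem-center for the hole `H`. -/
def IsGemCenter (G : SimpleGraph V) (v : V) (H : Set V) : Prop :=
  5 ≤ H.ncard ∧ ∃ h₁ h₂ h₃ h₄ : V, h₁ ∈ H ∧ h₂ ∈ H ∧ h₃ ∈ H ∧ h₄ ∈ H ∧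
    G.Adj h₁ h₂ ∧ G.Adj h₂ h₃ ∧ G.Adj h₃ h₄ ∧ h₁ ≠ h₃ ∧ h₁ ≠ h₄ ∧ h₂ ≠ h₄ ∧
    nbrsIn G v H = {h₁, h₂, h₃, h₄}

/-- `x` is the center of a star cutset of `G`. -/
def IsStarCutsetCenter (G : SimpleGraph V) (x : V) : Prop :=
  ∃ X : Set V, x ∈ X ∧ (∀ y ∈ X, y ≠ x → G.Adj x y) ∧
    ¬ (G.induce (Xᶜ)).Preconnected

/-- `v` is `(c₁, c₂)`-heavy with respect to the hole `H`. -/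
def IsHeavy (G : SimpleGraph V) (c₁ c₂ : V) (H : Set V) (v : V) : Prop :=
  IsMajorFor G v H ∧ Distant G v H c₁ c₂

/-- The pair of paths `HL`, `HR` forms a `(C, c₁, c₂)`-hole with frame
`(c₁, c₂, ℓ₁', ℓ₁, r₁, r₁', ℓ₂', ℓ₂, r₂, r₂')`, where `L` and `R` are the two
full components of the proper separator `C`. -/
def IsCHoleWithFrame (G : SimpleGraph V) (C L R : Set V)
    (c₁ c₂ ℓ₁ ℓ₁' ℓ₂ ℓ₂' r₁ r₁' r₂ r₂' : V) (HL HR : G.Walk c₁ c₂) : Prop :=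
  HL.IsPath ∧ HR.IsPath ∧
  (∀ v, v ∈ HL.support → v ∈ HR.support → v = c₁ ∨ v = c₂) ∧
  IsHole G (supp HL ∪ supp HR) ∧
  c₁ ∈ C ∧ c₂ ∈ C ∧
  (∀ v, v ∈ HL.support → v ≠ c₁ → v ≠ c₂ → v ∈ L) ∧
  (∀ v, v ∈ HR.support → v ≠ c₁ → v ≠ c₂ → v ∈ R) ∧
  (supp HL ∪ supp HR) ∩ C = {c₁, c₂} ∧
  ℓ₁ ∈ HL.support ∧ ℓ₁ ≠ c₂ ∧ G.Adj c₁ ℓ₁ ∧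
  ℓ₂ ∈ HL.support ∧ ℓ₂ ≠ c₁ ∧ G.Adj c₂ ℓ₂ ∧
  r₁ ∈ HR.support ∧ r₁ ≠ c₂ ∧ G.Adj c₁ r₁ ∧
  r₂ ∈ HR.support ∧ r₂ ≠ c₁ ∧ G.Adj c₂ r₂ ∧
  ((ℓ₁ = ℓ₂ ∧ ℓ₁' = ℓ₁) ∨
    (ℓ₁ ≠ ℓ₂ ∧ ℓ₁' ∈ HL.support ∧ ℓ₁' ≠ c₁ ∧ ℓ₁' ≠ c₂ ∧ G.Adj ℓ₁ ℓ₁')) ∧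
  ((ℓ₁ = ℓ₂ ∧ ℓ₂' = ℓ₂) ∨
    (ℓ₁ ≠ ℓ₂ ∧ ℓ₂' ∈ HL.support ∧ ℓ₂' ≠ c₁ ∧ ℓ₂' ≠ c₂ ∧ G.Adj ℓ₂ ℓ₂')) ∧
  ((r₁ = r₂ ∧ r₁' = r₁) ∨
    (r₁ ≠ r₂ ∧ r₁' ∈ HR.support ∧ r₁' ≠ c₁ ∧ r₁' ≠ c₂ ∧ G.Adj r₁ r₁')) ∧
  ((r₁ = r₂ ∧ r₂' = r₂) ∨
    (r₁ ≠ r₂ ∧ r₂' ∈ HR.support ∧ r₂' ≠ c₁ ∧ r₂' ≠ c₂ ∧ G.Adj r₂ r₂'))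

/-- The 3-dimensional hypercube graph: vertices are elements of `{0,1}³`, two
vertices being adjacent exactly when they differ in one coordinate. -/
def cubeGraph : SimpleGraph (Fin 3 → Bool) where
  Adj x y := ∃! i, x i ≠ y i
  symm := by
    constructor
    rintro x y ⟨i, hi, hj⟩
    exact ⟨i, Ne.symm hi, fun j h => hj j (Ne.symm h)⟩
  loopless := by
    constructor
    rintro x ⟨i, hi, -⟩
    exact hi rfl

section Walks

variable {G : SimpleGraph V}

def IsChordless {u v : V} (p : G.Walk u v) : Prop :=
  ∀ x ∈ p.support, ∀ y ∈ p.support, G.Adj x y → s(x, y) ∈ p.edges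

lemma _root_.SimpleGraph.Walk.exists_isSubwalk_of_mem_support {u v x y : V} (p : G.Walk u v)
    (hx : x ∈ p.support) (hy : y ∈ p.support) :
    (∃ q : G.Walk x y, q.IsSubwalk p) ∨ ∃ q : G.Walk y x, q.IsSubwalk p := by
  classical
  have hy' : y ∈ (p.takeUntil x hx).support ∨ y ∈ (p.dropUntil x hx).support := by
    rwa [← Walk.mem_support_append_iff, p.take_spec hx]
  rcases hy' with hy' | hy'
  · exact .inr ⟨_,
      ((p.takeUntil x hx).isSubwalk_dropUntil hy').trans (p.isSubwalk_takeUntil hx)⟩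
  · exact .inl ⟨_,
      ((p.dropUntil x hx).isSubwalk_takeUntil hy').trans (p.isSubwalk_dropUntil hx)⟩

lemma _root_.SimpleGraph.Walk.mem_edges_of_length_eq_one {x y : V} (q : G.Walk x y)
    (hq : q.length = 1) : s(x, y) ∈ q.edges := by
  rcases q with _ | ⟨_, _ | _⟩ <;> simp_all

lemma isChordless_of_length_eq_dist {u v : V} (p : G.Walk u v) (hp : p.length = G.dist u v) :
    IsChordless p := by
  intro x hx y hy hxy
  rcases p.exists_isSubwalk_of_mem_support hx hy with ⟨q, hq⟩ | ⟨q, hq⟩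
  · have hlen : q.length = 1 := by
      rw [length_eq_dist_of_subwalk hp hq, dist_eq_one_iff_adj.mpr hxy]
    exact hq.edges_subset (q.mem_edges_of_length_eq_one hlen)
  · have hlen : q.length = 1 := by
      rw [length_eq_dist_of_subwalk hp hq, dist_eq_one_iff_adj.mpr hxy.symm]
    rw [Sym2.eq_swap]
    exact hq.edges_subset (q.mem_edges_of_length_eq_one hlen)

lemma _root_.SimpleGraph.Walk.two_le_length_of_not_adj {a b : V} (p : G.Walk a b)
    (hne : a ≠ b) (hab : ¬ G.Adj a b) : 2 ≤ p.length := by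
  rcases p with _ | ⟨h, _ | _⟩
  · exact absurd rfl hne
  · exact absurd h hab
  · simp

lemma ncard_supp_of_isCycle {u : V} {c : G.Walk u u} (hc : c.IsCycle) :
    (supp c).ncard = c.length := by
  classical
  have hsupp : supp c = ↑c.support.tail.toFinset := by
    ext v
    rw [List.coe_toFinset, supp, Set.mem_ofPred_eq, Set.mem_ofPred_eq, ← c.cons_tail_support,
      List.mem_cons, List.tail_cons, or_iff_right_iff_imp]
    rintro rfl
    exact c.end_mem_tail_support hc.not_nil
  rw [hsupp, Set.ncard_coe_finset, List.toFinset_card_of_nodup hc.support_nodup,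
    List.length_tail, Walk.length_support, Nat.add_sub_cancel]

lemma isHole_of_isCycle {u : V} {c : G.Walk u u} (hc : c.IsCycle) (h4 : 4 ≤ c.length)
    (hcl : IsChordless c) : IsHole G (supp c) := by
  refine ⟨c.support.finite_toSet, ncard_supp_of_isCycle hc ▸ h4,
    c.connected_induce_support, ?_⟩
  intro v hv
  have hnbrs : nbrsIn G v (supp c) = c.toSubgraph.neighborSet v := by
    ext w
    simp only [nbrsIn, supp, Subgraph.mem_neighborSet, Walk.adj_toSubgraph_iff_mem_edges,
      Set.mem_ofPred_eq]
    exact ⟨fun ⟨hw, hvw⟩ => hcl v hv w hw hvw,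
      fun he => ⟨c.snd_mem_support_of_mem_edges he, c.adj_of_mem_edges he⟩⟩
  rw [hnbrs, hc.ncard_neighborSet_toSubgraph_eq_two hv]

end Walks

section TwoPaths

variable {G : SimpleGraph V} {a b : V} {P Q : G.Walk a b}

lemma supp_append_reverse : supp (P.append Q.reverse) = supp P ∪ supp Q := by
  ext v
  simp only [supp, Set.mem_union, Set.mem_ofPred_eq, Walk.mem_support_append_iff,
    Walk.support_reverse, List.mem_reverse]

lemma isCycle_append_reverse (hP : P.IsPath) (hQ : Q.IsPath) (hP2 : 2 ≤ P.length)
    (hint : ∀ v, v ∈ P.support → v ∈ Q.support → v = a ∨ v = b) :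
    (P.append Q.reverse).IsCycle := by
  refine hP.isCycle_append hQ.reverse (fun v hvP hvQ => ?_) (.inl hP2)
  have hva : v ≠ a := by
    rintro rfl
    exact (List.nodup_cons.mp (P.cons_tail_support ▸ hP.support_nodup)).1 hvP
  have hvb : v ≠ b := by
    rintro rfl
    exact (List.nodup_cons.mp (Q.reverse.cons_tail_support ▸ hQ.reverse.support_nodup)).1 hvQ
  have hvP' : v ∈ P.support := List.mem_of_mem_tail hvP
  have hvQ' : v ∈ Q.support := by
    simpa using List.mem_of_mem_tail hvQ
  exact (hint v hvP' hvQ').elim hva hvb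

lemma isHole_union_of_isChordless (hP : P.IsPath) (hQ : Q.IsPath)
    (hPc : IsChordless P) (hQc : IsChordless Q) (hne : a ≠ b) (hab : ¬ G.Adj a b)
    (hint : ∀ v, v ∈ P.support → v ∈ Q.support → v = a ∨ v = b)
    (hcross : ∀ x ∈ P.support, ∀ y ∈ Q.support, G.Adj x y →
      x = a ∨ x = b ∨ y = a ∨ y = b) :
    IsHole G (supp P ∪ supp Q) := by
  have hc := isCycle_append_reverse hP hQ (P.two_le_length_of_not_adj hne hab) hint
  refine supp_append_reverse ▸ isHole_of_isCycle hc ?_ ?_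
  · have := P.two_le_length_of_not_adj hne hab
    have := Q.two_le_length_of_not_adj hne hab
    rw [Walk.length_append, Walk.length_reverse]
    omega
  have hedge : ∀ {x y}, s(x, y) ∈ P.edges ∨ s(x, y) ∈ Q.edges →
      s(x, y) ∈ (P.append Q.reverse).edges := by
    intro x y h
    simpa only [Walk.edges_append, Walk.edges_reverse, List.mem_append, List.mem_reverse] using h
  have hPQ : ∀ x ∈ P.support, ∀ y ∈ Q.support, G.Adj x y →
      s(x, y) ∈ P.edges ∨ s(x, y) ∈ Q.edges := by
    intro x hx y hy hxy
    rcases hcross x hx y hy hxy with rfl | rfl | rfl | rfl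
    · exact .inr (hQc _ Q.start_mem_support _ hy hxy)
    · exact .inr (hQc _ Q.end_mem_support _ hy hxy)
    · exact .inl (hPc _ hx _ P.start_mem_support hxy)
    · exact .inl (hPc _ hx _ P.end_mem_support hxy)
  intro x hx y hy hxy
  simp only [Walk.mem_support_append_iff, Walk.support_reverse, List.mem_reverse] at hx hy
  apply hedge
  rcases hx with hx | hx <;> rcases hy with hy | hy
  · exact .inl (hPc x hx y hy hxy)
  · exact hPQ x hx y hy hxy
  · rw [Sym2.eq_swap]
    exact hPQ y hy x hx hxy.symm
  · exact .inr (hQc x hx y hy hxy)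

end TwoPaths

def IsFullCompOf (G : SimpleGraph V) (C D : Set V) : Prop :=
  IsCompOf G C D ∧ setNbrs G D = C

section Components

variable {G : SimpleGraph V} {C : Set V}

lemma exists_isChordless_path_of_reachable_induce {S : Set V} {a b : S}
    (hreach : (G.induce S).Reachable a b) :
    ∃ P : G.Walk a b, P.IsPath ∧ IsChordless P ∧ ∀ v ∈ P.support, v ∈ S := by
  obtain ⟨p, hp, hlen⟩ := hreach.exists_path_of_dist
  have hpc := isChordless_of_length_eq_dist p hlen
  have hchordless : IsChordless (p.map (Embedding.induce S).toHom) := by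
    intro _ hx' _ hy' hxy
    rw [Walk.support_map, List.mem_map] at hx' hy'
    obtain ⟨x, hx, rfl⟩ := hx'
    obtain ⟨y, hy, rfl⟩ := hy'
    rw [Walk.edges_map, List.mem_map]
    exact ⟨s(x, y), hpc x hx y hy hxy, rfl⟩
  have hsupport : ∀ v ∈ (p.map (Embedding.induce S).toHom).support, v ∈ S := by
    intro v hv
    rw [Walk.support_map, List.mem_map] at hv
    obtain ⟨x, -, rfl⟩ := hv
    exact x.2
  exact ⟨_, hp.map Subtype.val_injective, hchordless, hsupport⟩

lemma IsCompOf.subset_of_mem {A B : Set V} (hA : IsCompOf G C A) (hB : IsCompOf G C B)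
    {x : V} (hxA : x ∈ A) (hxB : x ∈ B) : A ⊆ B := by
  intro v hv
  obtain ⟨w⟩ := hA.2.2.1.preconnected ⟨x, hxA⟩ ⟨v, hv⟩
  suffices ∀ {y z : A} (w : (G.induce A).Walk y z), (y : V) ∈ B → (z : V) ∈ B from
    this w hxB
  intro y z w
  induction w with
  | nil => exact id
  | cons h _ ih =>
    exact fun hy => ih (hB.2.2.2 _ hy _ h (Set.disjoint_left.mp hA.2.1 (Subtype.prop _)))

lemma IsCompOf.disjoint_of_ne {A B : Set V} (hA : IsCompOf G C A) (hB : IsCompOf G C B)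
    (hne : A ≠ B) : Disjoint A B :=
  Set.disjoint_left.mpr fun _ hxA hxB =>
    hne ((hA.subset_of_mem hB hxA hxB).antisymm (hB.subset_of_mem hA hxB hxA))

lemma IsCompOf.not_adj_of_disjoint {A B : Set V} (hA : IsCompOf G C A) (hB : IsCompOf G C B)
    (hAB : Disjoint A B) {u v : V} (hu : u ∈ A) (hv : v ∈ B) : ¬ G.Adj u v := fun huv =>
  Set.disjoint_left.mp hAB (hA.2.2.2 u hu v huv (Set.disjoint_left.mp hB.2.1 hv)) hv

lemma exists_isChordless_path_through {D : Set V} (hD : IsFullCompOf G C D) {a b : V}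
    (ha : a ∈ C) (hb : b ∈ C) :
    ∃ P : G.Walk a b, P.IsPath ∧ IsChordless P ∧
      ∀ v ∈ P.support, v = a ∨ v = b ∨ v ∈ D := by
  rw [← hD.2] at ha hb
  obtain ⟨x, hxD, hxa⟩ := ha.2
  obtain ⟨y, hyD, hyb⟩ := hb.2
  have hDS : D ⊆ insert a (insert b D) := fun v hv => .inr (.inr hv)
  obtain ⟨w⟩ := hD.1.2.2.1.preconnected ⟨x, hxD⟩ ⟨y, hyD⟩
  have hxy : (G.induce (insert a (insert b D))).Reachable ⟨x, hDS hxD⟩ ⟨y, hDS hyD⟩ :=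
    ⟨w.map (G.induceHomOfLE hDS).toHom⟩
  have hax : (G.induce (insert a (insert b D))).Adj ⟨a, .inl rfl⟩ ⟨x, hDS hxD⟩ := hxa.symm
  have hyb : (G.induce (insert a (insert b D))).Adj ⟨y, hDS hyD⟩ ⟨b, .inr (.inl rfl)⟩ := hyb
  exact exists_isChordless_path_of_reachable_induce
    (hax.reachable.trans (hxy.trans hyb.reachable))

end Components

section Theta

variable {G : SimpleGraph V} {C A B : Set V} {a b : V} {P Q : G.Walk a b}

lemma internally_disjoint_of_disjoint (hAB : Disjoint A B)
    (hPA : ∀ v ∈ P.support, v = a ∨ v = b ∨ v ∈ A)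
    (hQB : ∀ v ∈ Q.support, v = a ∨ v = b ∨ v ∈ B) :
    ∀ v, v ∈ P.support → v ∈ Q.support → v = a ∨ v = b := by
  intro v hvP hvQ
  rcases hPA v hvP with h | h | hvA
  · exact .inl h
  · exact .inr h
  rcases hQB v hvQ with h | h | hvB
  · exact .inl h
  · exact .inr h
  · exact absurd hvB (Set.disjoint_left.mp hAB hvA)

lemma isHole_union_of_isCompOf (hA : IsCompOf G C A) (hB : IsCompOf G C B)
    (hAB : Disjoint A B) (hne : a ≠ b) (hab : ¬ G.Adj a b)
    (hP : P.IsPath) (hQ : Q.IsPath) (hPc : IsChordless P) (hQc : IsChordless Q)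
    (hPA : ∀ v ∈ P.support, v = a ∨ v = b ∨ v ∈ A)
    (hQB : ∀ v ∈ Q.support, v = a ∨ v = b ∨ v ∈ B) :
    IsHole G (supp P ∪ supp Q) := by
  refine isHole_union_of_isChordless hP hQ hPc hQc hne hab
    (internally_disjoint_of_disjoint hAB hPA hQB) fun x hx y hy hxy => ?_
  rcases hPA x hx with h | h | hxA
  · exact .inl h
  · exact .inr (.inl h)
  rcases hQB y hy with h | h | hyB
  · exact .inr (.inr (.inl h))
  · exact .inr (.inr (.inr h))
  · exact absurd hxy (hA.not_adj_of_disjoint hB hAB hxA hyB)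

lemma hasTheta_of_three_isFullCompOf {D₁ D₂ D₃ : Set V} (h₁ : IsFullCompOf G C D₁)
    (h₂ : IsFullCompOf G C D₂) (h₃ : IsFullCompOf G C D₃)
    (h₁₂ : D₁ ≠ D₂) (h₁₃ : D₁ ≠ D₃) (h₂₃ : D₂ ≠ D₃)
    (ha : a ∈ C) (hb : b ∈ C) (hne : a ≠ b) (hab : ¬ G.Adj a b) : HasTheta G := by
  obtain ⟨P₁, hP₁, hc₁, hs₁⟩ := exists_isChordless_path_through h₁ ha hb
  obtain ⟨P₂, hP₂, hc₂, hs₂⟩ := exists_isChordless_path_through h₂ ha hb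
  obtain ⟨P₃, hP₃, hc₃, hs₃⟩ := exists_isChordless_path_through h₃ ha hb
  have d₁₂ := h₁.1.disjoint_of_ne h₂.1 h₁₂
  have d₁₃ := h₁.1.disjoint_of_ne h₃.1 h₁₃
  have d₂₃ := h₂.1.disjoint_of_ne h₃.1 h₂₃
  exact ⟨a, b, P₁, P₂, P₃, hne, hab, hP₁, hP₂, hP₃,
    P₁.two_le_length_of_not_adj hne hab, P₂.two_le_length_of_not_adj hne hab,
    P₃.two_le_length_of_not_adj hne hab,
    internally_disjoint_of_disjoint d₁₂ hs₁ hs₂,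
    internally_disjoint_of_disjoint d₁₃ hs₁ hs₃,
    internally_disjoint_of_disjoint d₂₃ hs₂ hs₃,
    isHole_union_of_isCompOf h₁.1 h₂.1 d₁₂ hne hab hP₁ hP₂ hc₁ hc₂ hs₁ hs₂,
    isHole_union_of_isCompOf h₁.1 h₃.1 d₁₃ hne hab hP₁ hP₃ hc₁ hc₃ hs₁ hs₃,
    isHole_union_of_isCompOf h₂.1 h₃.1 d₂₃ hne hab hP₂ hP₃ hc₂ hc₃ hs₂ hs₃⟩

end Theta

/-- In a (theta, pyramid, prism, turtle)-free graph, every proper separator has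
exactly two full components. -/
theorem two_full_components {V : Type*} (G : SimpleGraph V) (hG : TPPTFree G)
    (C : Set V) (hC : IsProperSep G C) :
    ∃ L R : Set V, L ≠ R ∧
      (IsCompOf G C L ∧ setNbrs G L = C) ∧
      (IsCompOf G C R ∧ setNbrs G R = C) ∧
      ∀ D : Set V, IsCompOf G C D → setNbrs G D = C → D = L ∨ D = R := by
  obtain ⟨⟨L, R, hL, hR, hLR, hNL, hNR⟩, hnotClique⟩ := hC
  refine ⟨L, R, hLR, ⟨hL, hNL⟩, ⟨hR, hNR⟩, fun D hD hND => ?_⟩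
  by_contra! hDLR
  push Not at hnotClique
  obtain ⟨a, ha, b, hb, hne, hab⟩ := hnotClique
  exact hG.1 (hasTheta_of_three_isFullCompOf ⟨hD, hND⟩ ⟨hL, hNL⟩ ⟨hR, hNR⟩
    hDLR.1 hDLR.2 hLR ha hb hne hab)

end Paper
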